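/- arXiv:2105.09359 — 7 statements merged into one kernel-verified Lean document; each statement's English description precedes it below -/
import Mathlib

section
/- Let B be a nonnegative n×n matrix whose entries have the form B(i,j) = γ_i · a(i,j) / (G_i + Σ_k a(k,i)), where a(i,j) ≥ 0, γ_i ∈ (0,1], G_i ≥ 0, and G_i + Σ_k a(k,i) > 0 for all i. Then the spectral radius of B is at most 1. -/
/-!
With `D i = G i + ∑ k, a k i`, the positive vector `D` is subinvariant for `B` from the left:
`∑ i, B i j * D i = ∑ i, γ i * a i j ≤ D j`. For a left eigenvector `v` of `B` with eigenvalue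
`z`, evaluate the eigenvalue equation at an index `j` maximising `‖v i‖ / D i`; the triangle
inequality and subinvariance give `‖z‖ * ‖v j‖ ≤ ‖v j‖`.
-/

/-- The spectral radius of a real square matrix: the supremum of the moduli of its
complex eigenvalues (roots of the characteristic polynomial over `ℂ`). -/
noncomputable def specRad {n : ℕ} (M : Matrix (Fin n) (Fin n) ℝ) : ℝ :=
  sSup {r : ℝ | ∃ z : ℂ, (Matrix.charpoly (M.map (Complex.ofReal : ℝ → ℂ))).IsRoot z ∧
    r = ‖z‖}

open Finset Matrix

theorem Matrix.exists_vecMul_eq_smul_of_isRoot_charpoly {ι K : Type*} [Fintype ι]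
    [DecidableEq ι] [Field K] {M : Matrix ι ι K} {z : K} (hz : M.charpoly.IsRoot z) :
    ∃ v ≠ 0, v ᵥ* M = z • v := by
  rw [Polynomial.IsRoot, eval_charpoly, ← exists_vecMul_eq_zero_iff] at hz
  obtain ⟨v, hv, hvM⟩ := hz
  refine ⟨v, hv, ?_⟩
  rw [vecMul_sub, sub_eq_zero, scalar_apply] at hvM
  ext i
  rw [← hvM, vecMul_diagonal, Pi.smul_apply, smul_eq_mul, mul_comm]

theorem norm_le_one_of_vecMul_eq_smul {ι : Type*} [Fintype ι] {M : Matrix ι ι ℂ}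
    {v : ι → ℂ} {z : ℂ} (hv : v ≠ 0) (hvM : v ᵥ* M = z • v) {w : ι → ℝ}
    (hw : ∀ i, 0 < w i) (hMw : ∀ j, ∑ i, ‖M i j‖ * w i ≤ w j) : ‖z‖ ≤ 1 := by
  obtain ⟨i₀, hi₀⟩ := Function.ne_iff.mp hv
  have : Nonempty ι := ⟨i₀⟩
  obtain ⟨j, -, hj⟩ := exists_max_image univ (fun i => ‖v i‖ / w i) univ_nonempty
  set t := ‖v j‖ / w j
  have hvt : ∀ i, ‖v i‖ ≤ t * w i := fun i =>
    (div_le_iff₀ (hw i)).mp (hj i (mem_univ i))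
  have hvj : 0 < ‖v j‖ := by
    have := (div_pos (norm_pos_iff.mpr hi₀) (hw i₀)).trans_le (hj i₀ (mem_univ i₀))
    exact (div_pos_iff_of_pos_right (hw j)).mp this
  refine le_of_mul_le_mul_right ?_ hvj
  calc ‖z‖ * ‖v j‖ = ‖∑ i, v i * M i j‖ := by
        rw [← norm_mul, ← smul_eq_mul, ← Pi.smul_apply, ← hvM]; rfl
    _ ≤ ∑ i, ‖M i j‖ * ‖v i‖ := by
        refine (norm_sum_le _ _).trans_eq (sum_congr rfl fun i _ => ?_)
        rw [norm_mul, mul_comm]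
    _ ≤ ∑ i, ‖M i j‖ * (t * w i) := by gcongr with i; exact hvt i
    _ = t * ∑ i, ‖M i j‖ * w i := by rw [mul_sum]; exact sum_congr rfl fun i _ => by ring
    _ ≤ t * w j := mul_le_mul_of_nonneg_left (hMw j) (div_nonneg (norm_nonneg _) (hw j).le)
    _ = 1 * ‖v j‖ := by rw [one_mul]; exact div_mul_cancel₀ _ (hw j).ne'

theorem specRad_le_one_of_forall_sum_abs_mul_le {n : ℕ} {M : Matrix (Fin n) (Fin n) ℝ}
    {w : Fin n → ℝ} (hw : ∀ i, 0 < w i) (hMw : ∀ j, ∑ i, |M i j| * w i ≤ w j) :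
    specRad M ≤ 1 := by
  refine Real.sSup_le ?_ zero_le_one
  rintro _ ⟨z, hz, rfl⟩
  obtain ⟨v, hv, hvM⟩ := Matrix.exists_vecMul_eq_smul_of_isRoot_charpoly hz
  refine norm_le_one_of_vecMul_eq_smul hv hvM hw fun j => ?_
  simpa only [Matrix.map_apply, Complex.norm_real, Real.norm_eq_abs] using hMw j

/-- A skew-sub-stochastic matrix `B i j = γ i * a i j / (G i + ∑ k, a k i)`
with `a ≥ 0`, `γ i ∈ (0,1]`, `G i ≥ 0` and positive denominators has spectral radius at
most one. -/
theorem stmt_1 {n : ℕ} (B a : Matrix (Fin n) (Fin n) ℝ) (γ G : Fin n → ℝ)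
    (ha : ∀ i j, 0 ≤ a i j) (hγ : ∀ i, γ i ∈ Set.Ioc (0 : ℝ) 1) (hG : ∀ i, 0 ≤ G i)
    (hden : ∀ i, 0 < G i + ∑ k, a k i)
    (hB : ∀ i j, B i j = γ i * a i j / (G i + ∑ k, a k i)) :
    specRad B ≤ 1 := by
  refine specRad_le_one_of_forall_sum_abs_mul_le hden fun j => ?_
  have hBw : ∀ i, |B i j| * (G i + ∑ k, a k i) ≤ a i j := fun i => by
    have hB_nonneg : 0 ≤ B i j := hB i j ▸ div_nonneg
      (mul_nonneg (hγ i).1.le (ha i j)) (hden i).le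
    rw [abs_of_nonneg hB_nonneg, hB, div_mul_cancel₀ _ (hden i).ne']
    exact mul_le_of_le_one_left (ha i j) (hγ i).2
  calc ∑ i, |B i j| * (G i + ∑ k, a k i) ≤ ∑ i, a i j := sum_le_sum fun i _ => hBw i
    _ ≤ G j + ∑ k, a k j := le_add_of_nonneg_left (hG j)
end

section
/- Let B be a nonnegative n×n matrix of the form B(i,j) = γ_i · a(i,j) / (G_i + Σ_k a(k,i)) with a(i,j) ≥ 0, γ_i ∈ (0,1], G_i ≥ 0, and Σ_k a(k,i) ≠ 0 for all i. Suppose that for every index i, either (a(i,i) ≠ 0 and γ_i < 1) or G_i > 0. Then the spectral radius of B is strictly less than 1. -/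
open Finset Matrix

section WeightedColumnSums

variable {ι : Type*} [Fintype ι] [DecidableEq ι]

theorem det_scalar_sub_ne_zero_of_weighted_colSum_lt
    {M : Matrix ι ι ℂ} {d : ι → ℝ} (hd : ∀ i, 0 < d i) {z : ℂ}
    (h : ∀ j, ∑ i, d i * ‖M i j‖ < d j * ‖z‖) :
    (scalar ι z - M).det ≠ 0 := by
  set N : Matrix ι ι ℂ := diagonal (fun i => (d i : ℂ)) * (scalar ι z - M)
  have hN : N.det ≠ 0 := by
    refine det_ne_zero_of_sum_col_lt_diag fun j => ?_
    have hdiag : d j * ‖z‖ - d j * ‖M j j‖ ≤ ‖N j j‖ := by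
      simp only [N, diagonal_mul, Matrix.sub_apply, scalar_apply, diagonal_apply_eq, norm_mul,
        Complex.norm_real, Real.norm_of_nonneg (hd j).le, ← mul_sub]
      exact mul_le_mul_of_nonneg_left (norm_sub_norm_le _ _) (hd j).le
    have hoff : ∑ i ∈ univ.erase j, ‖N i j‖ = ∑ i ∈ univ.erase j, d i * ‖M i j‖ := by
      refine sum_congr rfl fun i hi => ?_
      simp [N, diagonal_mul, diagonal_apply_ne _ (ne_of_mem_erase hi),
        Real.norm_of_nonneg (hd i).le]
    have := h j
    rw [← add_sum_erase _ _ (mem_univ j)] at this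
    linarith
  rw [det_mul, det_diagonal] at hN
  exact right_ne_zero_of_mul hN

theorem norm_lt_of_isRoot_charpoly_of_weighted_colSum_lt
    {M : Matrix ι ι ℂ} {d : ι → ℝ} (hd : ∀ i, 0 < d i) {r : ℝ}
    (h : ∀ j, ∑ i, d i * ‖M i j‖ < d j * r) {z : ℂ} (hz : M.charpoly.IsRoot z) :
    ‖z‖ < r := by
  by_contra! hrz
  refine det_scalar_sub_ne_zero_of_weighted_colSum_lt hd (fun j => ?_)
    (M.eval_charpoly z ▸ hz.eq_zero)
  exact (h j).trans_le (mul_le_mul_of_nonneg_left hrz (hd j).le)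

end WeightedColumnSums

theorem specRad_lt_of_forall_isRoot_norm_lt {n : ℕ} (M : Matrix (Fin n) (Fin n) ℝ) {r : ℝ}
    (hr : 0 < r)
    (h : ∀ z : ℂ, (M.map (Complex.ofReal : ℝ → ℂ)).charpoly.IsRoot z → ‖z‖ < r) :
    specRad M < r := by
  set S : Set ℝ := {s : ℝ | ∃ z : ℂ, (M.map (Complex.ofReal : ℝ → ℂ)).charpoly.IsRoot z ∧
    s = ‖z‖}
  change sSup S < r
  rcases S.eq_empty_or_nonempty with hS | hS
  · rwa [hS, Real.sSup_empty]
  have hfin : S.Finite := by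
    have hp := (charpoly_monic (M.map (Complex.ofReal : ℝ → ℂ))).ne_zero
    refine ((Polynomial.finite_setOfPred_isRoot hp).image fun z : ℂ => ‖z‖).subset ?_
    rintro _ ⟨z, hz, rfl⟩
    exact ⟨z, hz, rfl⟩
  obtain ⟨z, hz, hsup⟩ := hS.csSup_mem hfin
  exact hsup ▸ h z hz

theorem sum_mul_lt_add_colSum {n : ℕ} {a : Matrix (Fin n) (Fin n) ℝ} {γ G : Fin n → ℝ}
    (ha : ∀ i j, 0 ≤ a i j) (hγ : ∀ i, γ i ≤ 1) (hG : ∀ i, 0 ≤ G i) {j : Fin n}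
    (hj : (a j j ≠ 0 ∧ γ j < 1) ∨ 0 < G j) :
    ∑ i, γ i * a i j < G j + ∑ i, a i j := by
  have hle : ∀ i ∈ univ, γ i * a i j ≤ a i j := fun i _ =>
    mul_le_of_le_one_left (ha i j) (hγ i)
  rcases hj with ⟨hajj, hγj⟩ | hGj
  · have hlt : γ j * a j j < a j j :=
      mul_lt_of_lt_one_left ((ha j j).lt_of_ne' hajj) hγj
    linarith [sum_lt_sum hle ⟨j, mem_univ j, hlt⟩, hG j]
  · linarith [sum_le_sum hle]

/-- A skew-sub-stochastic matrix with nonvanishing column sums such that for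
every index `i` either `a i i ≠ 0 ∧ γ i < 1` or `G i > 0`, has spectral radius strictly
less than one. -/
theorem stmt_3 {n : ℕ} (B a : Matrix (Fin n) (Fin n) ℝ) (γ G : Fin n → ℝ)
    (ha : ∀ i j, 0 ≤ a i j) (hγ : ∀ i, γ i ∈ Set.Ioc (0 : ℝ) 1) (hG : ∀ i, 0 ≤ G i)
    (hcol : ∀ i, ∑ k, a k i ≠ 0)
    (hB : ∀ i j, B i j = γ i * a i j / (G i + ∑ k, a k i))
    (hstrict : ∀ i, (a i i ≠ 0 ∧ γ i < 1) ∨ 0 < G i) :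
    specRad B < 1 := by
  have hd : ∀ i, 0 < G i + ∑ k, a k i := fun i =>
    add_pos_of_nonneg_of_pos (hG i) ((sum_nonneg fun k _ => ha k i).lt_of_ne' (hcol i))
  refine specRad_lt_of_forall_isRoot_norm_lt B one_pos fun z hz =>
    norm_lt_of_isRoot_charpoly_of_weighted_colSum_lt hd (fun j => ?_) hz
  calc ∑ i, (G i + ∑ k, a k i) * ‖B.map (Complex.ofReal : ℝ → ℂ) i j‖
      = ∑ i, γ i * a i j := sum_congr rfl fun i _ => by
        have hBij : 0 ≤ B i j := hB i j ▸
          div_nonneg (mul_nonneg (hγ i).1.le (ha i j)) (hd i).le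
        rw [map_apply, Complex.norm_real, Real.norm_of_nonneg hBij, hB,
          mul_div_cancel₀ _ (hd i).ne']
    _ < G j + ∑ k, a k j := sum_mul_lt_add_colSum ha (fun i => (hγ i).2) hG (hstrict j)
    _ = (G j + ∑ k, a k j) * 1 := (mul_one _).symm
end

section
/- Let B be a nonnegative n×n matrix with spectral radius ρ(B) < 1. Then B is skew-sub-stochastic: there exist a(i,j) ≥ 0, γ_i ∈ (0,1], and G_i ≥ 0 such that G_i + Σ_k a(k,i) > 0 and B(i,j) = γ_i · a(i,j) / (G_i + Σ_k a(k,i)) for all i, j. -/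
/-- `B` is skew-sub-stochastic: `B i j = γ i * a i j / (G i + ∑ k, a k i)` for some
nonnegative `a`, factors `γ i ∈ (0,1]`, slacks `G i ≥ 0`, with positive denominators. -/
def SkewSubStochastic {n : ℕ} (B : Matrix (Fin n) (Fin n) ℝ) : Prop :=
  ∃ (a : Matrix (Fin n) (Fin n) ℝ) (γ G : Fin n → ℝ),
    (∀ i j, 0 ≤ a i j) ∧ (∀ i, γ i ∈ Set.Ioc (0 : ℝ) 1) ∧ (∀ i, 0 ≤ G i) ∧
    (∀ i, 0 < G i + ∑ k, a k i) ∧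
    (∀ i j, B i j = γ i * a i j / (G i + ∑ k, a k i))

/-!
Since `ρ(B) < 1`, Gelfand's formula makes the Neumann series `S = ∑ Bᵏ` converge, and
`S * B = S - 1`. The row vector `s = 1ᵀ S` is then entrywise `≥ 1` and satisfies `s B = s - 1`,
so `a i j = s i * B i j` has column sums `s i - 1`; with `γ = G = 1` the denominators are `s i`.
-/

open Filter Matrix

theorem summable_norm_pow_of_spectralRadius_lt_one {A : Type*} [NormedRing A]
    [NormedAlgebra ℂ A] [CompleteSpace A] {a : A} (h : spectralRadius ℂ a < 1) :
    Summable fun k => ‖a ^ k‖ := by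
  obtain ⟨r, hρr, hr1⟩ := ENNReal.lt_iff_exists_nnreal_btwn.1 h
  have hbound : ∀ᶠ k : ℕ in atTop, ‖‖a ^ k‖‖ ≤ (r : ℝ) ^ k := by
    have gelfand := spectrum.pow_nnnorm_pow_one_div_tendsto_nhds_spectralRadius a
    filter_upwards [gelfand.eventually_lt_const hρr, eventually_ge_atTop 1] with k hk hk1
    rw [one_div, ENNReal.rpow_inv_lt_iff (by positivity)] at hk
    rw [norm_norm, ← NNReal.coe_pow, ← coe_nnnorm, NNReal.coe_le_coe]
    exact_mod_cast hk.le
  exact .of_norm_bounded_eventually_nat (summable_geometric_of_lt_one r.2 (by exact_mod_cast hr1))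
    hbound

theorem tsum_pow_mul_eq_sub_one {R : Type*} [Ring R] [TopologicalSpace R] [IsTopologicalRing R]
    [T2Space R] {x : R} (hx : Summable fun k => x ^ k) :
    (∑' k, x ^ k) * x = ∑' k, x ^ k - 1 := by
  rw [← hx.tsum_mul_right, hx.tsum_eq_zero_add]
  simp [pow_succ]

theorem norm_le_specRad_of_mem_spectrum {n : ℕ} {B : Matrix (Fin n) (Fin n) ℝ} {z : ℂ}
    (hz : z ∈ spectrum ℂ (B.map Complex.ofReal)) : ‖z‖ ≤ specRad B := by
  have hbdd : BddAbove
      {r : ℝ | ∃ z : ℂ, (B.map Complex.ofReal).charpoly.IsRoot z ∧ r = ‖z‖} := by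
    refine (((Polynomial.finite_setOfPred_isRoot
      (B.map Complex.ofReal).charpoly_monic.ne_zero).image (‖·‖)).subset ?_).bddAbove
    rintro r ⟨z, hz, rfl⟩
    exact ⟨z, hz, rfl⟩
  exact le_csSup hbdd ⟨z, mem_spectrum_iff_isRoot_charpoly.1 hz, rfl⟩

theorem specRad_nonneg {n : ℕ} (B : Matrix (Fin n) (Fin n) ℝ) : 0 ≤ specRad B :=
  Real.sSup_nonneg <| by rintro _ ⟨z, -, rfl⟩; exact norm_nonneg z

section LinftyOpNorm

-- Any submultiplicative norm serves Gelfand's formula; for this one `map ofReal` is isometric.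
attribute [local instance] Matrix.linftyOpSeminormedAddCommGroup Matrix.linftyOpNormedRing
  Matrix.linftyOpNormedAlgebra

theorem Matrix.linfty_opNorm_map_eq {m n α β : Type*} [Fintype m] [Fintype n]
    [SeminormedAddCommGroup α] [SeminormedAddCommGroup β] (A : Matrix m n α) {f : α → β}
    (hf : ∀ a, ‖f a‖₊ = ‖a‖₊) : ‖A.map f‖ = ‖A‖ := by
  simp [linfty_opNorm_def, hf]

theorem spectralRadius_map_ofReal_lt {n : ℕ} {B : Matrix (Fin n) (Fin n) ℝ} {r : NNReal}
    (h : specRad B < r) : spectralRadius ℂ (B.map Complex.ofReal) < r := by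
  rcases (spectrum ℂ (B.map Complex.ofReal)).eq_empty_or_nonempty with hσ | hσ
  · simpa [spectralRadius, hσ] using (specRad_nonneg B).trans_lt h
  · exact spectrum.spectralRadius_lt_of_forall_lt_of_nonempty hσ fun z hz =>
      (norm_le_specRad_of_mem_spectrum hz).trans_lt h

theorem summable_pow_of_specRad_lt_one {n : ℕ} {B : Matrix (Fin n) (Fin n) ℝ}
    (h : specRad B < 1) : Summable fun k => B ^ k := by
  refine .of_norm ?_
  have hnorm (k : ℕ) : ‖(B.map Complex.ofReal) ^ k‖ = ‖B ^ k‖ := by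
    change ‖(B.map Complex.ofRealHom) ^ k‖ = _
    rw [← Matrix.map_pow]
    exact linfty_opNorm_map_eq _ fun x => by simp
  have hρ : spectralRadius ℂ (B.map Complex.ofReal) < 1 := by
    simpa using spectralRadius_map_ofReal_lt (r := 1) (by simpa using h)
  exact (summable_norm_pow_of_spectralRadius_lt_one hρ).congr hnorm

end LinftyOpNorm

theorem Matrix.exists_pos_vecMul_eq_sub_one {n : Type*} [Fintype n] [DecidableEq n]
    {B : Matrix n n ℝ} (hB : ∀ i j, 0 ≤ B i j) (hsum : Summable fun k => B ^ k) :
    ∃ s : n → ℝ, (∀ i, 0 < s i) ∧ s ᵥ* B = s - 1 := by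
  set S := ∑' k, B ^ k
  have hS_nonneg (i j : n) : 0 ≤ S i j := by
    have hS : S i j = ∑' k, (B ^ k) i j := by
      rw [← tsum_apply (Pi.summable.1 hsum i), ← tsum_apply hsum]
      rfl
    exact hS ▸ tsum_nonneg fun k => pow_apply_nonneg hB k i j
  have hs : (1 ᵥ* S) ᵥ* B = 1 ᵥ* S - 1 := by
    rw [vecMul_vecMul, tsum_pow_mul_eq_sub_one hsum, vecMul_sub, vecMul_one]
  refine ⟨1 ᵥ* S, fun i => ?_, hs⟩
  have hs_nonneg (k : n) : 0 ≤ (1 ᵥ* S) k :=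
    Finset.sum_nonneg fun l _ => mul_nonneg zero_le_one (hS_nonneg l k)
  have hsB : 0 ≤ ((1 ᵥ* S) ᵥ* B) i :=
    Finset.sum_nonneg fun k _ => mul_nonneg (hs_nonneg k) (hB k i)
  have := congrFun hs i
  simp only [Pi.sub_apply, Pi.one_apply] at this
  linarith

theorem skewSubStochastic_of_vecMul_eq_sub_one {n : ℕ} {B : Matrix (Fin n) (Fin n) ℝ}
    (hB : ∀ i j, 0 ≤ B i j) {s : Fin n → ℝ} (hs_pos : ∀ i, 0 < s i)
    (hs : s ᵥ* B = s - 1) :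
    SkewSubStochastic B := by
  have hcol (i : Fin n) : 1 + ∑ k, s k * B k i = s i := by
    have := congrFun hs i
    simp only [vecMul, dotProduct, Pi.sub_apply, Pi.one_apply] at this
    linarith
  refine ⟨fun i j => s i * B i j, fun _ => 1, fun _ => 1,
    fun i j => mul_nonneg (hs_pos i).le (hB i j), fun _ => ⟨one_pos, le_rfl⟩,
    fun _ => zero_le_one, fun i => ?_, fun i j => ?_⟩
  · rw [hcol]
    exact hs_pos i
  · rw [hcol, one_mul, mul_div_cancel_left₀ _ (hs_pos i).ne']

/-- Any nonnegative matrix with spectral radius strictly less than one is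
skew-sub-stochastic. -/
theorem stmt_5 {n : ℕ} (B : Matrix (Fin n) (Fin n) ℝ)
    (hB : ∀ i j, 0 ≤ B i j) (hρ : specRad B < 1) :
    SkewSubStochastic B := by
  obtain ⟨s, hs_pos, hs⟩ := exists_pos_vecMul_eq_sub_one hB (summable_pow_of_specRad_lt_one hρ)
  exact skewSubStochastic_of_vecMul_eq_sub_one hB hs_pos hs
end

section
/- The matrix B = [[1, 0], [2, 1]] has spectral radius 1 but is not skew-sub-stochastic: there do not exist a(i,j) ≥ 0, γ_i ∈ (0,1], G_i ≥ 0 with G_i + Σ_k a(k,i) > 0 such that B(i,j) = γ_i · a(i,j) / (G_i + Σ_k a(k,i)) for all i, j ∈ {1,2}. -/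
open Polynomial

theorem Matrix.charpoly_of_fin_two_lowerTriangular {R : Type*} [CommRing R] [Nontrivial R]
    (a c d : R) : (!![a, 0; c, d]).charpoly = (X - C a) * (X - C d) := by
  rw [Matrix.charpoly_fin_two]
  simp only [Matrix.trace_fin_two_of, Matrix.det_fin_two_of, map_add, map_mul,
    zero_mul, sub_zero]
  ring

theorem specRad_of_fin_two_lowerTriangular (a c d : ℝ) :
    specRad !![a, 0; c, d] = max |a| |d| := by
  have hchar : ((!![a, 0; c, d]).map (Complex.ofReal : ℝ → ℂ)).charpoly =
      (X - C (a : ℂ)) * (X - C (d : ℂ)) := by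
    rw [show (!![a, 0; c, d]).map (Complex.ofReal : ℝ → ℂ) =
      (!![a, 0; c, d]).map Complex.ofRealHom from rfl, Matrix.charpoly_map,
      Matrix.charpoly_of_fin_two_lowerTriangular]
    simp
  have hmoduli : {r : ℝ | ∃ z : ℂ, ((X - C (a : ℂ)) * (X - C (d : ℂ))).IsRoot z ∧ r = ‖z‖} =
      {|a|, |d|} := by
    ext r
    simp [sub_eq_zero]
  rw [specRad, hchar, hmoduli, csSup_pair]

theorem SkewSubStochastic.apply_eq_zero_of_diag_eq_one {n : ℕ}
    {B : Matrix (Fin n) (Fin n) ℝ} (hB : SkewSubStochastic B) {i k : Fin n}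
    (hii : B i i = 1) (hki : k ≠ i) : B k i = 0 := by
  obtain ⟨a, γ, G, ha, hγ, hG, hD, hBa⟩ := hB
  -- Since `γ i ≤ 1`, `B i i = 1` leaves no room in the denominator for `G i` or any `a k i`.
  have hcol : G i + ∑ l, a l i ≤ a i i := by
    have h := hBa i i
    rw [hii, eq_div_iff (hD i).ne', one_mul] at h
    nlinarith [(hγ i).2, ha i i]
  have hsum : a i i + a k i ≤ ∑ l, a l i :=
    Finset.add_le_sum (fun l _ => ha l i) (Finset.mem_univ _) (Finset.mem_univ _) hki.symm
  have hak : a k i = 0 := le_antisymm (by linarith [hG i]) (ha k i)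
  rw [hBa k i, hak, mul_zero, zero_div]

/-- The matrix `[[1,0],[2,1]]` has spectral radius one, yet it is not
skew-sub-stochastic. -/
theorem stmt_6 :
    specRad (!![(1 : ℝ), 0; 2, 1]) = 1 ∧ ¬ SkewSubStochastic (!![(1 : ℝ), 0; 2, 1]) := by
  refine ⟨by simp [specRad_of_fin_two_lowerTriangular], fun hB => ?_⟩
  have h := hB.apply_eq_zero_of_diag_eq_one (i := 0) (k := 1) (by simp) (by decide)
  norm_num at h
end

section
/- With the setup of the random-network model: p_1,...,p_n > 0, z = Σ_k k p_k, β_k > 0, λ_k ∈ (0,1], μ_k ∈ [0,1), β̄ = (1/z)Σ_k k p_k β_k λ_k, and A(i,j) = (1−μ_i)β_i (i p_j λ_i)/(μ_i β_i + z β̄). If μ_i > 0 for at least one index i, then the spectral radius of A is strictly less than 1. -/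
open Matrix Polynomial

theorem Matrix.eq_zero_or_eq_dotProduct_of_isRoot_charpoly_vecMulVec {ι K : Type*} [Fintype ι]
    [DecidableEq ι] [CommRing K] [IsDomain K] {u v : ι → K} {w : K}
    (hw : (vecMulVec u v).charpoly.IsRoot w) : w = 0 ∨ w = u ⬝ᵥ v := by
  rw [charpoly_vecMulVec] at hw
  cases isEmpty_or_nonempty ι
  · simp at hw
  · obtain ⟨m, hm⟩ := Nat.exists_eq_add_one_of_ne_zero (Fintype.card_ne_zero (α := ι))
    have hfactor : w ^ m * (w - u ⬝ᵥ v) = 0 := by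
      rw [IsRoot.def, hm] at hw
      simpa [pow_succ, mul_sub, mul_comm] using hw
    rcases mul_eq_zero.1 hfactor with h | h
    · exact .inl (pow_eq_zero_iff'.1 h).1
    · exact .inr (sub_eq_zero.1 h)

theorem specRad_vecMulVec_le {n : ℕ} (u v : Fin n → ℝ) :
    specRad (vecMulVec u v) ≤ |u ⬝ᵥ v| := by
  have hmap : (vecMulVec u v).map (Complex.ofReal : ℝ → ℂ) =
      vecMulVec (Complex.ofRealHom ∘ u) (Complex.ofRealHom ∘ v) := by
    ext i j
    simp [vecMulVec_apply]
  refine Real.sSup_le ?_ (abs_nonneg _)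
  rintro r ⟨w, hw, rfl⟩
  rw [hmap] at hw
  rcases eq_zero_or_eq_dotProduct_of_isRoot_charpoly_vecMulVec hw with rfl | rfl
  · simp
  · rw [← RingHom.map_dotProduct, Complex.ofRealHom_eq_coe, Complex.norm_real, Real.norm_eq_abs]

theorem one_sub_mul_div_le_div {μ b x D : ℝ} (hμ : 0 ≤ μ) (hb : 0 ≤ b) (hx : 0 ≤ x)
    (hD : 0 < D) : (1 - μ) * x / (μ * b + D) ≤ x / D :=
  calc (1 - μ) * x / (μ * b + D) ≤ x / (μ * b + D) :=
        div_le_div_of_nonneg_right (by nlinarith) (by positivity)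
    _ ≤ x / D := div_le_div_of_nonneg_left hx hD (by nlinarith)

theorem one_sub_mul_div_lt_div {μ b x D : ℝ} (hμ : 0 < μ) (hb : 0 ≤ b) (hx : 0 < x)
    (hD : 0 < D) : (1 - μ) * x / (μ * b + D) < x / D :=
  calc (1 - μ) * x / (μ * b + D) < x / (μ * b + D) :=
        div_lt_div_of_pos_right (by nlinarith) (by positivity)
    _ ≤ x / D := div_le_div_of_nonneg_left hx.le hD (by nlinarith)

theorem sum_one_sub_mul_div_add_sum_lt_one {ι : Type*} [Fintype ι] {μ b x : ι → ℝ}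
    (hμ : ∀ k, 0 ≤ μ k) (hb : ∀ k, 0 ≤ b k) (hx : ∀ k, 0 < x k) (h0 : ∃ i, 0 < μ i) :
    ∑ k, (1 - μ k) * x k / (μ k * b k + ∑ j, x j) < 1 := by
  obtain ⟨i, hi⟩ := h0
  have hS : 0 < ∑ j, x j := Finset.sum_pos (fun k _ => hx k) ⟨i, Finset.mem_univ i⟩
  calc ∑ k, (1 - μ k) * x k / (μ k * b k + ∑ j, x j) < ∑ k, x k / ∑ j, x j :=
        Finset.sum_lt_sum (fun k _ => one_sub_mul_div_le_div (hμ k) (hb k) (hx k).le hS)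
          ⟨i, Finset.mem_univ i, one_sub_mul_div_lt_div hi (hb i) (hx i) hS⟩
    _ = 1 := by rw [← Finset.sum_div, div_self hS.ne']

theorem stmt_10_general (n : ℕ) (p β lam μ : Fin n → ℝ)
    (hp : ∀ k, 0 < p k) (hβ : ∀ k, 0 < β k)
    (hlam : ∀ k, lam k ∈ Set.Ioc (0 : ℝ) 1) (hμ : ∀ k, μ k ∈ Set.Ico (0 : ℝ) 1)
    (z βbar : ℝ)
    (hz : z = ∑ k, ((k.1 : ℝ) + 1) * p k)
    (hβbar : βbar = (1 / z) * ∑ k, ((k.1 : ℝ) + 1) * p k * β k * lam k)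
    (A : Matrix (Fin n) (Fin n) ℝ)
    (hA : ∀ i j, A i j =
      (1 - μ i) * β i * ((i.1 : ℝ) + 1) * p j * lam i / (μ i * β i + z * βbar))
    (h0 : ∃ i, 0 < μ i) :
    specRad A < 1 := by
  set x : Fin n → ℝ := fun k ↦ ((k.1 : ℝ) + 1) * p k * β k * lam k
  have hx : ∀ k, 0 < x k := fun k ↦ by
    have := (hlam k).1; have := hp k; have := hβ k; positivity
  have hz0 : z ≠ 0 := by
    obtain ⟨i, -⟩ := h0
    rw [hz]
    exact (Finset.sum_pos (fun k _ ↦ by have := hp k; positivity) ⟨i, Finset.mem_univ i⟩).ne'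
  have hzβbar : z * βbar = ∑ j, x j := by rw [hβbar]; field_simp
  set c : Fin n → ℝ := fun i ↦
    (1 - μ i) * β i * ((i.1 : ℝ) + 1) * lam i / (μ i * β i + ∑ j, x j)
  have hA_eq : A = vecMulVec c p := by
    ext i j
    rw [hA, vecMulVec_apply, hzβbar]
    ring
  have hdot : c ⬝ᵥ p = ∑ k, (1 - μ k) * x k / (μ k * β k + ∑ j, x j) :=
    Finset.sum_congr rfl fun k _ ↦ by simp only [c, x]; ring
  have hdot_nonneg : 0 ≤ c ⬝ᵥ p := by
    rw [hdot]
    have hS : 0 ≤ ∑ j, x j := Finset.sum_nonneg fun j _ ↦ (hx j).le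
    exact Finset.sum_nonneg fun k _ ↦ div_nonneg (mul_nonneg (sub_nonneg.2 (hμ k).2.le) (hx k).le)
      (add_nonneg (mul_nonneg (hμ k).1 (hβ k).le) hS)
  have hdot_lt : c ⬝ᵥ p < 1 := hdot ▸ sum_one_sub_mul_div_add_sum_lt_one
    (fun k ↦ (hμ k).1) (fun k ↦ (hβ k).le) hx h0
  calc specRad A ≤ |c ⬝ᵥ p| := hA_eq ▸ specRad_vecMulVec_le c p
    _ < 1 := by rwa [abs_of_nonneg hdot_nonneg]

/-- First moment matrix of the random-network model (Model 2 with
`ε = δ = 0`): if some innovation probability is positive, the spectral radius is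
strictly less than one. Type `i : Fin n` has out-degree `i + 1`. -/
theorem stmt_10 (n : ℕ) (hn : 0 < n) (p β lam μ : Fin n → ℝ)
    (hp : ∀ k, 0 < p k) (hβ : ∀ k, 0 < β k)
    (hlam : ∀ k, lam k ∈ Set.Ioc (0 : ℝ) 1) (hμ : ∀ k, μ k ∈ Set.Ico (0 : ℝ) 1)
    (z βbar : ℝ)
    (hz : z = ∑ k, ((k.1 : ℝ) + 1) * p k)
    (hβbar : βbar = (1 / z) * ∑ k, ((k.1 : ℝ) + 1) * p k * β k * lam k)
    (A : Matrix (Fin n) (Fin n) ℝ)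
    (hA : ∀ i j, A i j =
      (1 - μ i) * β i * ((i.1 : ℝ) + 1) * p j * lam i / (μ i * β i + z * βbar))
    (h0 : ∃ i, 0 < μ i) :
    specRad A < 1 :=
  stmt_10_general n p β lam μ hp hβ hlam hμ z βbar hz hβbar A hA h0
end

section
/- Let ε be a positive integer, let p_1,...,p_n > 0 with z = Σ_k k p_k, β_k > 0, λ_k ∈ (0,1], set β̄ = (1/z)Σ_k k p_k β_k λ_k, and define the n×n matrix A by A(i,j) = β_i·(ε·δ_{ij} + i·p_j·λ_i)/(z·β̄ + ε·β_i), where δ_{ij} is the Kronecker delta. Then 1 is an eigenvalue of A and the spectral radius of A equals 1. -/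
open Matrix

theorem Matrix.isRoot_charpoly_iff_exists_mulVec_eq_smul {K ι : Type*} [Field K] [Fintype ι]
    [DecidableEq ι] (M : Matrix ι ι K) (μ : K) :
    M.charpoly.IsRoot μ ↔ ∃ v ≠ 0, M *ᵥ v = μ • v := by
  rw [← Matrix.charpoly_toLin', ← Module.End.hasEigenvalue_iff_isRoot_charpoly,
    Module.End.hasEigenvalue_iff, Submodule.ne_bot_iff]
  simp only [Module.End.mem_eigenspace_iff, toLin'_apply, and_comm]

theorem Matrix.isRoot_one_charpoly_of_mulVec_eq_self {K ι : Type*} [Field K] [Fintype ι]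
    [DecidableEq ι] {M : Matrix ι ι K} {v : ι → K} (hv : v ≠ 0) (hMv : M *ᵥ v = v) :
    M.charpoly.IsRoot 1 :=
  (isRoot_charpoly_iff_exists_mulVec_eq_smul M 1).mpr ⟨v, hv, by rw [hMv, one_smul]⟩

section Nonneg

variable {ι : Type*} [Fintype ι] {M : Matrix ι ι ℝ}

theorem Matrix.norm_mulVec_map_ofReal_le (hM : ∀ i j, 0 ≤ M i j) (x : ι → ℂ) (i : ι) :
    ‖(M.map (↑) *ᵥ x) i‖ ≤ (M *ᵥ fun j => ‖x j‖) i :=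
  calc ‖∑ j, (M i j : ℂ) * x j‖
      ≤ ∑ j, ‖(M i j : ℂ) * x j‖ := norm_sum_le _ _
    _ = ∑ j, M i j * ‖x j‖ := by
      simp only [norm_mul, Complex.norm_real, Real.norm_of_nonneg (hM i _)]

theorem Matrix.mulVec_le_mulVec_of_nonneg (hM : ∀ i j, 0 ≤ M i j) {v w : ι → ℝ}
    (hvw : ∀ j, v j ≤ w j) (i : ι) : (M *ᵥ v) i ≤ (M *ᵥ w) i :=
  Finset.sum_le_sum fun j _ => mul_le_mul_of_nonneg_left (hvw j) (hM i j)

theorem Matrix.norm_le_of_isRoot_charpoly_map [DecidableEq ι] (hM : ∀ i j, 0 ≤ M i j)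
    {v : ι → ℝ} (hv : ∀ i, 0 < v i) {r : ℝ} (hMv : ∀ i, (M *ᵥ v) i ≤ r * v i) {u : ℂ}
    (hu : (M.map (↑)).charpoly.IsRoot u) : ‖u‖ ≤ r := by
  obtain ⟨x, hx0, hx⟩ := (isRoot_charpoly_iff_exists_mulVec_eq_smul _ _).mp hu
  obtain ⟨j, hj⟩ := Function.ne_iff.mp hx0
  -- Collatz–Wielandt: compare `x` with `v` where the ratio `‖x i‖ / v i` is largest.
  obtain ⟨i, -, hi⟩ :=
    Finset.exists_max_image Finset.univ (fun i => ‖x i‖ / v i) ⟨j, Finset.mem_univ j⟩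
  set c := ‖x i‖ / v i
  have hxi : 0 < ‖x i‖ := by
    have : 0 < c := (div_pos (norm_pos_iff.mpr hj) (hv j)).trans_le (hi j (Finset.mem_univ j))
    exact (div_pos_iff_of_pos_right (hv i)).mp this
  have hxc : ∀ k, ‖x k‖ ≤ c * v k := fun k =>
    (div_le_iff₀ (hv k)).mp (hi k (Finset.mem_univ k))
  refine le_of_mul_le_mul_right ?_ hxi
  calc ‖u‖ * ‖x i‖ = ‖(M.map (↑) *ᵥ x) i‖ := by rw [hx, Pi.smul_apply, smul_eq_mul, norm_mul]
    _ ≤ (M *ᵥ fun k => ‖x k‖) i := norm_mulVec_map_ofReal_le hM x i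
    _ ≤ (M *ᵥ (c • v)) i := mulVec_le_mulVec_of_nonneg hM hxc i
    _ ≤ c * (r * v i) := by
      rw [mulVec_smul, Pi.smul_apply, smul_eq_mul]
      exact mul_le_mul_of_nonneg_left (hMv i) (div_nonneg (norm_nonneg _) (hv i).le)
    _ = r * ‖x i‖ := by rw [mul_left_comm, div_mul_cancel₀ _ (hv i).ne']

end Nonneg

theorem specRad_eq_one_of_mulVec_eq_self {n : ℕ} {M : Matrix (Fin n) (Fin n) ℝ}
    (hM : ∀ i j, 0 ≤ M i j) {v : Fin n → ℝ} (hv : ∀ i, 0 < v i) (hv0 : v ≠ 0)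
    (hMv : M *ᵥ v = v) :
    specRad M = 1 := by
  have hroot : (M.map (↑)).charpoly.IsRoot (1 : ℂ) := by
    rw [show M.map (↑) = M.map Complex.ofRealHom from rfl, charpoly_map,
      ← Complex.ofRealHom.map_one]
    exact (isRoot_one_charpoly_of_mulVec_eq_self hv0 hMv).map
  have hbound : ∀ r ∈ {r : ℝ | ∃ u : ℂ, (M.map (↑)).charpoly.IsRoot u ∧ r = ‖u‖}, r ≤ 1 := by
    rintro r ⟨u, hu, rfl⟩
    exact norm_le_of_isRoot_charpoly_map hM hv (fun i => by rw [hMv, one_mul]) hu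
  have hone : (1 : ℝ) ∈ {r : ℝ | ∃ u : ℂ, (M.map (↑)).charpoly.IsRoot u ∧ r = ‖u‖} :=
    ⟨1, hroot, norm_one.symm⟩
  exact le_antisymm (csSup_le ⟨1, hone⟩ hbound) (le_csSup ⟨1, hbound⟩ hone)

section FirstMoment

variable {ι : Type*} [Fintype ι] [DecidableEq ι]

-- In the paper's notation `w i = (i + 1) λ i`, and the sum in the denominator is `z β̄`.
noncomputable def firstMomentMatrix (ε : ℝ) (p β w : ι → ℝ) : Matrix ι ι ℝ :=
  Matrix.of fun i j => β i * (ε * (if i = j then 1 else 0) + w i * p j) /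
    (∑ k, p k * (w k * β k) + ε * β i)

variable {ε : ℝ} {p β w : ι → ℝ}

theorem firstMomentMatrix_nonneg (hε : 0 ≤ ε) (hp : ∀ k, 0 ≤ p k) (hβ : ∀ k, 0 ≤ β k)
    (hw : ∀ k, 0 ≤ w k) (i j : ι) : 0 ≤ firstMomentMatrix ε p β w i j := by
  have hS : 0 ≤ ∑ k, p k * (w k * β k) :=
    Finset.sum_nonneg fun k _ => mul_nonneg (hp k) (mul_nonneg (hw k) (hβ k))
  have hδ : (0 : ℝ) ≤ if i = j then 1 else 0 := by split_ifs <;> norm_num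
  exact div_nonneg (mul_nonneg (hβ i) (add_nonneg (mul_nonneg hε hδ)
    (mul_nonneg (hw i) (hp j)))) (add_nonneg hS (mul_nonneg hε (hβ i)))

theorem firstMomentMatrix_mulVec_self
    (hden : ∀ i, ∑ k, p k * (w k * β k) + ε * β i ≠ 0) :
    firstMomentMatrix ε p β w *ᵥ (w * β) = w * β := by
  funext i
  simp only [mulVec, dotProduct, firstMomentMatrix, of_apply, Pi.mul_apply, div_mul_eq_mul_div,
    ← Finset.sum_div, mul_add, add_mul, Finset.sum_add_distrib, mul_ite, mul_one, mul_zero,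
    ite_mul, zero_mul, Finset.sum_ite_eq, Finset.mem_univ, if_true]
  rw [div_eq_iff (hden i), ← Finset.sum_congr rfl fun k _ => (by ring :
    β i * w i * (p k * (w k * β k)) = β i * (w i * p k) * (w k * β k)), ← Finset.mul_sum]
  ring

end FirstMoment

theorem stmt_11_general (n : ℕ) (hn : 0 < n) (ε : ℕ) (p β lam : Fin n → ℝ)
    (hp : ∀ k, 0 < p k) (hβ : ∀ k, 0 < β k)
    (hlam : ∀ k, lam k ∈ Set.Ioc (0 : ℝ) 1)
    (z βbar : ℝ)
    (hz : z = ∑ k, ((k.1 : ℝ) + 1) * p k)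
    (hβbar : βbar = (1 / z) * ∑ k, ((k.1 : ℝ) + 1) * p k * β k * lam k)
    (A : Matrix (Fin n) (Fin n) ℝ)
    (hA : ∀ i j, A i j =
      β i * ((ε : ℝ) * (if i = j then 1 else 0) + ((i.1 : ℝ) + 1) * p j * lam i) /
        (z * βbar + (ε : ℝ) * β i)) :
    (Matrix.charpoly A).IsRoot 1 ∧ specRad A = 1 := by
  have : NeZero n := ⟨hn.ne'⟩
  set w : Fin n → ℝ := fun i => ((i.1 : ℝ) + 1) * lam i
  have hw : ∀ i, 0 < w i := fun i => mul_pos (by positivity) (hlam i).1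
  have hv : ∀ i, 0 < (w * β) i := fun i => mul_pos (hw i) (hβ i)
  have hv0 : w * β ≠ 0 := Function.ne_iff.mpr ⟨0, (hv 0).ne'⟩
  have hz0 : z ≠ 0 := hz ▸ (Finset.sum_pos (fun k _ => mul_pos (by positivity) (hp k))
    Finset.univ_nonempty).ne'
  have hS : z * βbar = ∑ k, p k * (w k * β k) := by
    rw [hβbar, ← mul_assoc, mul_one_div_cancel hz0, one_mul]
    exact Finset.sum_congr rfl fun k _ => by ring
  have hSpos : 0 < ∑ k, p k * (w k * β k) :=
    Finset.sum_pos (fun k _ => mul_pos (hp k) (hv k)) Finset.univ_nonempty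
  have hA' : A = firstMomentMatrix ε p β w := by
    ext i j
    rw [hA, hS]
    simp only [firstMomentMatrix, of_apply, w]
    ring
  have hAv : A *ᵥ (w * β) = w * β := hA' ▸ firstMomentMatrix_mulVec_self fun i =>
    (add_pos_of_pos_of_nonneg hSpos (by have := hβ i; positivity)).ne'
  have hA0 : ∀ i j, 0 ≤ A i j := hA' ▸ firstMomentMatrix_nonneg (Nat.cast_nonneg ε)
    (fun k => (hp k).le) (fun k => (hβ k).le) (fun k => (hw k).le)
  exact ⟨isRoot_one_charpoly_of_mulVec_eq_self hv0 hAv,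
    specRad_eq_one_of_mulVec_eq_self hA0 hv hv0 hAv⟩

/-- First moment matrix of Model 2 with restricted sharing parameter
`δ = ε ≥ 1` and zero innovation: `1` is an eigenvalue of `A` and the spectral radius of
`A` equals one. Type `i : Fin n` has out-degree `i + 1`. -/
theorem stmt_11 (n : ℕ) (hn : 0 < n) (ε : ℕ) (hε : 0 < ε) (p β lam : Fin n → ℝ)
    (hp : ∀ k, 0 < p k) (hβ : ∀ k, 0 < β k)
    (hlam : ∀ k, lam k ∈ Set.Ioc (0 : ℝ) 1)
    (z βbar : ℝ)
    (hz : z = ∑ k, ((k.1 : ℝ) + 1) * p k)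
    (hβbar : βbar = (1 / z) * ∑ k, ((k.1 : ℝ) + 1) * p k * β k * lam k)
    (A : Matrix (Fin n) (Fin n) ℝ)
    (hA : ∀ i j, A i j =
      β i * ((ε : ℝ) * (if i = j then 1 else 0) + ((i.1 : ℝ) + 1) * p j * lam i) /
        (z * βbar + (ε : ℝ) * β i)) :
    (Matrix.charpoly A).IsRoot 1 ∧ specRad A = 1 :=
  stmt_11_general n hn ε p β lam hp hβ hlam z βbar hz hβbar A hA
end

section
/- Let ε be a positive integer and let A(i,j) = (1−μ_i)β_i(ε δ_{ij} + i p_j λ_i)/(μ_i β_i + z β̄ + ε β_i) with p_k > 0, z = Σ_k k p_k, β_k > 0, λ_k ∈ (0,1], μ_k ∈ [0,1), β̄ = (1/z)Σ_k k p_k β_k λ_k. If μ_i > 0 for at least one index i, then the spectral radius of A is strictly less than 1. -/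
open Matrix Finset

section Eigenvalues

variable {ι K : Type*} [Fintype ι]

theorem Matrix.exists_mulVec_eq_smul_of_isRoot_charpoly [DecidableEq ι] [Field K]
    {M : Matrix ι ι K} {ρ : K} (hρ : M.charpoly.IsRoot ρ) : ∃ v ≠ 0, M *ᵥ v = ρ • v := by
  obtain ⟨v, hv0, hv⟩ := exists_mulVec_eq_zero_iff.mpr ((eval_charpoly M ρ).symm.trans hρ)
  refine ⟨v, hv0, ?_⟩
  rw [sub_mulVec, sub_eq_zero] at hv
  ext i
  rw [← hv, scalar_apply, mulVec_diagonal, Pi.smul_apply, smul_eq_mul]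

theorem sum_div_sub_eq_one_of_diagonal_add_vecMulVec_mulVec [DecidableEq ι] [Field K]
    {a b p v : ι → K} {ρ : K} (hv0 : v ≠ 0) (hv : (diagonal a + vecMulVec b p) *ᵥ v = ρ • v)
    (hρ : ∀ i, ρ ≠ a i) :
    ∑ i, p i * b i / (ρ - a i) = 1 := by
  set s := p ⬝ᵥ v
  have hcoord : ∀ i, (ρ - a i) * v i = b i * s := fun i => by
    have := congrFun hv i
    simp only [add_mulVec, vecMulVec_mulVec, Pi.add_apply, mulVec_diagonal, Pi.smul_apply,
      op_smul_eq_mul, smul_eq_mul] at this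
    linear_combination -this
  have hsub : ∀ i, ρ - a i ≠ 0 := fun i => sub_ne_zero.mpr (hρ i)
  have hs : s ≠ 0 := by
    intro hs
    refine hv0 (funext fun i => ?_)
    simpa [hs, hsub i] using hcoord i
  have hv_eq : ∀ i, v i = b i * s / (ρ - a i) := fun i => by
    rw [eq_div_iff (hsub i), mul_comm, hcoord]
  refine mul_left_cancel₀ hs ?_
  calc s * ∑ i, p i * b i / (ρ - a i) = ∑ i, p i * (b i * s / (ρ - a i)) := by
        rw [mul_sum]; congr! 1 with i; ring
    _ = s * 1 := by simp only [← hv_eq, mul_one]; rfl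

theorem one_sub_le_norm_sub_ofReal {ρ : ℂ} (hρ : 1 ≤ ‖ρ‖) {a : ℝ} (ha : 0 ≤ a) :
    1 - a ≤ ‖ρ - a‖ :=
  calc 1 - a ≤ ‖ρ‖ - ‖(a : ℂ)‖ := by rw [Complex.norm_of_nonneg ha]; linarith
    _ ≤ ‖ρ - a‖ := norm_sub_norm_le ρ a

theorem norm_sum_div_sub_ofReal_le {a c : ι → ℝ} (ha0 : ∀ i, 0 ≤ a i) (ha1 : ∀ i, a i < 1)
    (hc : ∀ i, 0 ≤ c i) {ρ : ℂ} (hρ : 1 ≤ ‖ρ‖) :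
    ‖∑ i, (c i : ℂ) / (ρ - a i)‖ ≤ ∑ i, c i / (1 - a i) :=
  (norm_sum_le _ _).trans <| sum_le_sum fun i _ => by
    rw [norm_div, Complex.norm_of_nonneg (hc i)]
    exact div_le_div_of_nonneg_left (hc i) (sub_pos.mpr (ha1 i))
      (one_sub_le_norm_sub_ofReal hρ (ha0 i))

theorem norm_lt_one_of_isRoot_charpoly_diagonal_add_vecMulVec [DecidableEq ι] {a b p : ι → ℝ}
    (ha0 : ∀ i, 0 ≤ a i) (ha1 : ∀ i, a i < 1) (hb : ∀ i, 0 ≤ b i) (hp : ∀ i, 0 ≤ p i)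
    (hsum : ∑ i, p i * b i / (1 - a i) < 1) {ρ : ℂ}
    (hρ : ((diagonal a + vecMulVec b p).map ((↑) : ℝ → ℂ)).charpoly.IsRoot ρ) : ‖ρ‖ < 1 := by
  by_contra! h1
  have hmap : (diagonal a + vecMulVec b p).map ((↑) : ℝ → ℂ) =
      diagonal (fun i => (a i : ℂ)) + vecMulVec (fun i => (b i : ℂ)) (fun i => (p i : ℂ)) := by
    ext i j
    by_cases hij : i = j <;> simp [vecMulVec_apply, hij]
  rw [hmap] at hρ
  obtain ⟨v, hv0, hv⟩ := exists_mulVec_eq_smul_of_isRoot_charpoly hρ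
  have hρa : ∀ i, ρ ≠ a i := fun i hi => by
    have := one_sub_le_norm_sub_ofReal h1 (ha0 i)
    rw [hi, sub_self, norm_zero] at this
    linarith [ha1 i]
  have hsec := sum_div_sub_eq_one_of_diagonal_add_vecMulVec_mulVec hv0 hv hρa
  have hle := norm_sum_div_sub_ofReal_le ha0 ha1 (fun i => mul_nonneg (hp i) (hb i)) h1
  push_cast at hle
  rw [hsec, norm_one] at hle
  linarith

end Eigenvalues

theorem specRad_lt_of_forall_isRoot {n : ℕ} (M : Matrix (Fin n) (Fin n) ℝ) {c : ℝ} (hc : 0 < c)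
    (h : ∀ w : ℂ, (M.map ((↑) : ℝ → ℂ)).charpoly.IsRoot w → ‖w‖ < c) : specRad M < c := by
  set S := {r : ℝ | ∃ w : ℂ, (M.map ((↑) : ℝ → ℂ)).charpoly.IsRoot w ∧ r = ‖w‖}
  have hS : S.Finite := by
    have hroots := Polynomial.finite_setOfPred_isRoot (M.map ((↑) : ℝ → ℂ)).charpoly_monic.ne_zero
    refine (hroots.image fun w : ℂ => ‖w‖).subset ?_
    rintro r ⟨w, hw, rfl⟩
    exact ⟨w, hw, rfl⟩
  change sSup S < c
  rcases S.eq_empty_or_nonempty with hS0 | hSne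
  · rwa [hS0, Real.sSup_empty]
  · rw [hS.csSup_lt_iff hSne]
    rintro _ ⟨w, hw, rfl⟩
    exact h w hw

theorem sum_one_sub_mul_div_add_lt_one {ι : Type*} [Fintype ι] {w μ c : ι → ℝ}
    (hw : ∀ i, 0 < w i) (hμ : ∀ i, 0 ≤ μ i) (hc : ∀ i, 0 ≤ c i) (h0 : ∃ i, 0 < μ i) :
    ∑ i, (1 - μ i) * w i / (∑ k, w k + μ i * c i) < 1 := by
  obtain ⟨i₀, hi₀⟩ := h0
  set W := ∑ k, w k
  have hW : 0 < W := sum_pos (fun k _ => hw k) ⟨i₀, mem_univ _⟩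
  have hden : ∀ i, W ≤ W + μ i * c i := fun i =>
    le_add_of_nonneg_right (mul_nonneg (hμ i) (hc i))
  calc ∑ i, (1 - μ i) * w i / (W + μ i * c i) < ∑ i, w i / W := by
        refine sum_lt_sum (fun i _ => div_le_div₀ (hw i).le ?_ hW (hden i))
          ⟨i₀, mem_univ _, div_lt_div₀ ?_ (hden i₀) (hw i₀).le hW⟩
        · nlinarith [hμ i, hw i]
        · nlinarith [hw i₀]
    _ = 1 := by rw [← sum_div, div_self hW.ne']

namespace ModelTwo

variable {ι : Type*} [Fintype ι] {ε : ℝ} {p β κ μ : ι → ℝ}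

noncomputable def totalWeight (p β κ : ι → ℝ) : ℝ := ∑ k, p k * β k * κ k

noncomputable def denom (ε : ℝ) (p β κ μ : ι → ℝ) (i : ι) : ℝ :=
  μ i * β i + totalWeight p β κ + ε * β i

-- The matrix `A` of the statement, with `κ i = (i + 1) λᵢ`, so that `totalWeight p β κ = z β̄`.
noncomputable def firstMoment [DecidableEq ι] (ε : ℝ) (p β κ μ : ι → ℝ) : Matrix ι ι ℝ :=
  of fun i j => (1 - μ i) * β i * (ε * (if i = j then 1 else 0) + κ i * p j) / denom ε p β κ μ i

theorem firstMoment_eq_diagonal_add_vecMulVec [DecidableEq ι] :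
    firstMoment ε p β κ μ =
      diagonal (fun i => ε * ((1 - μ i) * β i) / denom ε p β κ μ i) +
        vecMulVec (fun i => (1 - μ i) * β i * κ i / denom ε p β κ μ i) p := by
  ext i j
  simp only [firstMoment, of_apply, Matrix.add_apply, diagonal_apply, vecMulVec_apply]
  split_ifs <;> ring

theorem norm_lt_one_of_isRoot_charpoly_firstMoment [DecidableEq ι] (hε : 0 ≤ ε)
    (hp : ∀ i, 0 < p i) (hβ : ∀ i, 0 < β i) (hκ : ∀ i, 0 < κ i) (hμ0 : ∀ i, 0 ≤ μ i)
    (hμ1 : ∀ i, μ i ≤ 1) (h0 : ∃ i, 0 < μ i) {ρ : ℂ}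
    (hρ : ((firstMoment ε p β κ μ).map ((↑) : ℝ → ℂ)).charpoly.IsRoot ρ) : ‖ρ‖ < 1 := by
  set W := totalWeight p β κ
  set D := denom ε p β κ μ
  have hw : ∀ i, 0 < p i * β i * κ i := fun i => mul_pos (mul_pos (hp i) (hβ i)) (hκ i)
  have hW : 0 < W := sum_pos (fun k _ => hw k) ⟨h0.choose, mem_univ _⟩
  have hc : ∀ i, 0 ≤ (1 + ε) * β i := fun i => mul_nonneg (by linarith) (hβ i).le
  have hmass : ∀ i, 0 ≤ (1 - μ i) * β i := fun i =>
    mul_nonneg (sub_nonneg.mpr (hμ1 i)) (hβ i).le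
  have hD : ∀ i, 0 < D i := fun i => by
    have := mul_nonneg (hμ0 i) (hβ i).le
    have := mul_nonneg hε (hβ i).le
    simp only [D, denom]; linarith
  have hgap : ∀ i, 1 - ε * ((1 - μ i) * β i) / D i = (W + μ i * ((1 + ε) * β i)) / D i :=
    fun i => by
      rw [eq_div_iff (hD i).ne', sub_mul, div_mul_cancel₀ _ (hD i).ne']
      simp only [D, W, denom]; ring
  have hgap_pos : ∀ i, 0 < W + μ i * ((1 + ε) * β i) := fun i =>
    add_pos_of_pos_of_nonneg hW (mul_nonneg (hμ0 i) (hc i))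
  rw [firstMoment_eq_diagonal_add_vecMulVec] at hρ
  refine norm_lt_one_of_isRoot_charpoly_diagonal_add_vecMulVec
    (fun i => div_nonneg (mul_nonneg hε (hmass i)) (hD i).le)
    (fun i => sub_pos.mp (by rw [hgap]; exact div_pos (hgap_pos i) (hD i)))
    (fun i => div_nonneg (mul_nonneg (hmass i) (hκ i).le) (hD i).le) (fun i => (hp i).le) ?_ hρ
  calc ∑ i, p i * ((1 - μ i) * β i * κ i / D i) / (1 - ε * ((1 - μ i) * β i) / D i)
      = ∑ i, (1 - μ i) * (p i * β i * κ i) / (W + μ i * ((1 + ε) * β i)) := by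
        refine sum_congr rfl fun i _ => ?_
        rw [hgap]
        field_simp [(hD i).ne', (hgap_pos i).ne']
    _ < 1 := sum_one_sub_mul_div_add_lt_one hw hμ0 hc h0

end ModelTwo

theorem stmt_12_general (n : ℕ) (ε : ℕ) (p β lam μ : Fin n → ℝ)
    (hp : ∀ k, 0 < p k) (hβ : ∀ k, 0 < β k)
    (hlam : ∀ k, lam k ∈ Set.Ioc (0 : ℝ) 1) (hμ : ∀ k, μ k ∈ Set.Ico (0 : ℝ) 1)
    (z βbar : ℝ)
    (hz : z = ∑ k, ((k.1 : ℝ) + 1) * p k)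
    (hβbar : βbar = (1 / z) * ∑ k, ((k.1 : ℝ) + 1) * p k * β k * lam k)
    (A : Matrix (Fin n) (Fin n) ℝ)
    (hA : ∀ i j, A i j =
      (1 - μ i) * β i * ((ε : ℝ) * (if i = j then 1 else 0) + ((i.1 : ℝ) + 1) * p j * lam i) /
        (μ i * β i + z * βbar + (ε : ℝ) * β i))
    (h0 : ∃ i, 0 < μ i) :
    specRad A < 1 := by
  set κ : Fin n → ℝ := fun k => ((k.1 : ℝ) + 1) * lam k
  have hz0 : z ≠ 0 := by
    rw [hz]
    exact (sum_pos (fun k _ => mul_pos k.1.cast_add_one_pos (hp k)) ⟨h0.choose, mem_univ _⟩).ne'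
  have hzβbar : z * βbar = ModelTwo.totalWeight p β κ := by
    rw [hβbar, ← mul_assoc, mul_one_div_cancel hz0, one_mul, ModelTwo.totalWeight]
    exact sum_congr rfl fun k _ => by ring
  have hA' : A = ModelTwo.firstMoment ε p β κ μ := by
    ext i j
    rw [hA, hzβbar]
    simp only [ModelTwo.firstMoment, ModelTwo.denom, of_apply, κ]
    ring
  subst hA'
  exact specRad_lt_of_forall_isRoot _ one_pos fun ρ hρ =>
    ModelTwo.norm_lt_one_of_isRoot_charpoly_firstMoment ε.cast_nonneg hp hβ
      (fun k => mul_pos k.1.cast_add_one_pos (hlam k).1) (fun k => (hμ k).1)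
      (fun k => (hμ k).2.le) h0 hρ

/-- First moment matrix of Model 2 with restricted sharing parameter
`δ = ε ≥ 1` and innovation: if some innovation probability is positive, the spectral
radius of `A` is strictly less than one. Type `i : Fin n` has out-degree `i + 1`. -/
theorem stmt_12 (n : ℕ) (hn : 0 < n) (ε : ℕ) (hε : 0 < ε) (p β lam μ : Fin n → ℝ)
    (hp : ∀ k, 0 < p k) (hβ : ∀ k, 0 < β k)
    (hlam : ∀ k, lam k ∈ Set.Ioc (0 : ℝ) 1) (hμ : ∀ k, μ k ∈ Set.Ico (0 : ℝ) 1)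
    (z βbar : ℝ)
    (hz : z = ∑ k, ((k.1 : ℝ) + 1) * p k)
    (hβbar : βbar = (1 / z) * ∑ k, ((k.1 : ℝ) + 1) * p k * β k * lam k)
    (A : Matrix (Fin n) (Fin n) ℝ)
    (hA : ∀ i j, A i j =
      (1 - μ i) * β i * ((ε : ℝ) * (if i = j then 1 else 0) + ((i.1 : ℝ) + 1) * p j * lam i) /
        (μ i * β i + z * βbar + (ε : ℝ) * β i))
    (h0 : ∃ i, 0 < μ i) :
    specRad A < 1 :=
  stmt_12_general n ε p β lam μ hp hβ hlam hμ z βbar hz hβbar A hA h0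
end
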